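/- arXiv:1510.04798 — 6 statements merged into one kernel-verified Lean document; each statement's English description precedes it below -/
import Mathlib

section
/- Let Y be an abelian group and let f₁, f₂ : Y → ℝ satisfy f₁(u+v) + f₂(u−v) = A(u) + A(v) for all u, v ∈ Y, where A(u) = f₁(u) + f₂(u). Then Δ_v² Δ_{2h} f₁(u) = 0 for all u, v, h ∈ Y, where Δ_h f(y) = f(y+h) − f(y) is the finite difference operator. -/
/-- The finite difference operator `Δ_h f(y) = f(y+h) − f(y)`. -/
def finDiff {Y : Type*} [AddCommGroup Y] (h : Y) (f : Y → ℝ) : Y → ℝ :=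
  fun y => f (y + h) - f y

theorem stmt_1 {Y : Type*} [AddCommGroup Y] (f₁ f₂ : Y → ℝ)
    (heq : ∀ u v : Y,
      f₁ (u + v) + f₂ (u - v) = (f₁ u + f₂ u) + (f₁ v + f₂ v)) :
    ∀ u v h : Y, finDiff v (finDiff v (finDiff (h + h) f₁)) u = 0 := by
  have Q : ∀ w t : Y, (f₁ (w + t + t) + f₂ (w + t + t)) + (f₁ w + f₂ w) =
      2 * (f₁ (w + t) + f₂ (w + t)) + (f₁ t + f₂ t) + (f₁ (-t) + f₂ (-t)) := by
    intro w t
    have h1 := heq (w + t) t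
    have h2 := heq (w + t) (-t)
    rw [add_sub_cancel_right] at h1
    rw [add_neg_cancel_right, sub_neg_eq_add] at h2
    linarith
  have S : ∀ x t : Y, 2 * (f₁ (x + t + t) - f₁ x) =
      (f₁ (x + t + t) + f₂ (x + t + t)) - (f₁ x + f₂ x)
        + (f₁ t + f₂ t) - (f₁ (-t) + f₂ (-t)) := by
    intro x t
    have h1 := heq (x + t) t
    have h2 := heq (x + t) (-t)
    rw [add_sub_cancel_right] at h1
    rw [add_neg_cancel_right, sub_neg_eq_add] at h2
    linarith
  intro u v h
  simp only [finDiff, ← add_assoc]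
  have S1 := S (u + v + v) h
  have S2 := S (u + v) h
  have S3 := S u h
  have Q1 := Q (u + h + h) v
  have e1 : u + h + h + v + v = u + v + v + h + h := by abel
  have e2 : u + h + h + v = u + v + h + h := by abel
  rw [e1, e2] at Q1
  have Q2 := Q u v
  linarith
end

section
/- Let Y be an abelian group and l₁, l₂ : Y → ℂ functions with |l_k(u)| = 1, l_k(0) = 1, l_k(−u) = conj(l_k(u)), satisfying l₁(u+v)·l₂(u−v) = l₁(u)·l₂(u)·l₁(v)·l₂(−v) for all u, v ∈ Y. Then l_k(2u) = l_k(u)² for all u ∈ Y and k = 1, 2. -/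
open ComplexConjugate

lemma Complex.mul_apply_neg_eq_one {Y : Type*} [Neg Y] {l : Y → ℂ} {u : Y}
    (hu : ‖l u‖ = 1) (hneg : l (-u) = conj (l u)) : l u * l (-u) = 1 := by
  rw [hneg, Complex.mul_conj', hu]
  norm_num

-- Put `v = u` and `v = -u` in the functional equation; the factors `l₂ (u - u)` and `l₁ (u + -u)`
-- become `1`, and `l_k u * l_k (-u) = 1` removes the remaining stray factors.
theorem stmt_2 {Y : Type*} [AddCommGroup Y] (l₁ l₂ : Y → ℂ)
    (hmod : ∀ u : Y, ‖l₁ u‖ = 1 ∧ ‖l₂ u‖ = 1)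
    (h0 : l₁ 0 = 1 ∧ l₂ 0 = 1)
    (hsym : ∀ u : Y, l₁ (-u) = (starRingEnd ℂ) (l₁ u) ∧
      l₂ (-u) = (starRingEnd ℂ) (l₂ u))
    (heq : ∀ u v : Y,
      l₁ (u + v) * l₂ (u - v) = l₁ u * l₂ u * l₁ v * l₂ (-v)) :
    ∀ u : Y, l₁ (u + u) = (l₁ u) ^ 2 ∧ l₂ (u + u) = (l₂ u) ^ 2 := by
  intro u
  have hl₁ := Complex.mul_apply_neg_eq_one (hmod u).1 (hsym u).1
  have hl₂ := Complex.mul_apply_neg_eq_one (hmod u).2 (hsym u).2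
  have diag := heq u u
  have antidiag := heq u (-u)
  rw [sub_self, h0.2] at diag
  rw [add_neg_cancel, sub_neg_eq_add, neg_neg, h0.1] at antidiag
  exact ⟨by linear_combination diag + l₁ u ^ 2 * hl₂,
    by linear_combination antidiag + l₂ u ^ 2 * hl₁⟩
end

section
/- Let Y be an abelian group and l₁, l₂ : Y → ℂ functions with |l_k(u)| = 1, l_k(0) = 1, l_k(−u) = conj(l_k(u)), satisfying l₁(u+v)·l₂(u−v) = l₁(u)·l₂(u)·l₁(v)·l₂(−v) for all u, v ∈ Y. Then l₁(u+v)² = l₁(u)²·l₁(v)² for all u, v ∈ Y, i.e. l₁² is a homomorphism from Y to the unit circle. -/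
/-!
Multiplying the functional equation at `(u, v)` by the one at `(v, u)` gives
`l₁(u+v)² · l₂(u-v) l₂(v-u) = l₁(u)² l₁(v)² · l₂(u) l₂(-u) · l₂(v) l₂(-v)`,
and every factor `l₂(w) l₂(-w) = |l₂(w)|²` equals `1`.
-/

theorem sq_map_add_of_map_add_mul_map_sub {Y M : Type*} [AddCommGroup Y] [CommMonoid M]
    (l₁ l₂ : Y → M) (hinv : ∀ w, l₂ w * l₂ (-w) = 1)
    (heq : ∀ u v, l₁ (u + v) * l₂ (u - v) = l₁ u * l₂ u * l₁ v * l₂ (-v)) (u v : Y) :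
    l₁ (u + v) ^ 2 = l₁ u ^ 2 * l₁ v ^ 2 :=
  calc l₁ (u + v) ^ 2 = l₁ (u + v) ^ 2 * (l₂ (u - v) * l₂ (-(u - v))) := by rw [hinv, mul_one]
    _ = l₁ (u + v) * l₂ (u - v) * (l₁ (v + u) * l₂ (v - u)) := by
      rw [add_comm v u, neg_sub, sq]; ac_rfl
    _ = l₁ u * l₂ u * l₁ v * l₂ (-v) * (l₁ v * l₂ v * l₁ u * l₂ (-u)) := by rw [heq, heq]
    _ = l₁ u ^ 2 * l₁ v ^ 2 * ((l₂ u * l₂ (-u)) * (l₂ v * l₂ (-v))) := by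
      simp only [sq]; ac_rfl
    _ = l₁ u ^ 2 * l₁ v ^ 2 := by rw [hinv, hinv, one_mul, mul_one]

theorem Complex.mul_conj_eq_one_of_norm_eq_one {z : ℂ} (hz : ‖z‖ = 1) :
    z * (starRingEnd ℂ) z = 1 := by
  rw [Complex.mul_conj', hz, Complex.ofReal_one, one_pow]

theorem stmt_3_general {Y : Type*} [AddCommGroup Y] (l₁ l₂ : Y → ℂ)
    (hmod : ∀ u : Y, ‖l₁ u‖ = 1 ∧ ‖l₂ u‖ = 1)
    (hsym : ∀ u : Y, l₁ (-u) = (starRingEnd ℂ) (l₁ u) ∧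
      l₂ (-u) = (starRingEnd ℂ) (l₂ u))
    (heq : ∀ u v : Y,
      l₁ (u + v) * l₂ (u - v) = l₁ u * l₂ u * l₁ v * l₂ (-v)) :
    ∀ u v : Y, (l₁ (u + v)) ^ 2 = (l₁ u) ^ 2 * (l₁ v) ^ 2 := by
  have hinv (w : Y) : l₂ w * l₂ (-w) = 1 := by
    rw [(hsym w).2]
    exact Complex.mul_conj_eq_one_of_norm_eq_one (hmod w).2
  exact sq_map_add_of_map_add_mul_map_sub l₁ l₂ hinv heq

theorem stmt_3 {Y : Type*} [AddCommGroup Y] (l₁ l₂ : Y → ℂ)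
    (hmod : ∀ u : Y, ‖l₁ u‖ = 1 ∧ ‖l₂ u‖ = 1)
    (h0 : l₁ 0 = 1 ∧ l₂ 0 = 1)
    (hsym : ∀ u : Y, l₁ (-u) = (starRingEnd ℂ) (l₁ u) ∧
      l₂ (-u) = (starRingEnd ℂ) (l₂ u))
    (heq : ∀ u v : Y,
      l₁ (u + v) * l₂ (u - v) = l₁ u * l₂ u * l₁ v * l₂ (-v)) :
    ∀ u v : Y, (l₁ (u + v)) ^ 2 = (l₁ u) ^ 2 * (l₁ v) ^ 2 :=
  stmt_3_general l₁ l₂ hmod hsym heq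
end

section
/- Let Y be an abelian group and l'₁, l'₂ : Y → {−1, 1} functions with l'_k(0) = 1 and l'_k(−y) = l'_k(y), satisfying l'₁(u+v)·l'₂(u−v) = l'₁(u)·l'₂(u)·l'₁(v)·l'₂(v) for all u, v ∈ Y. Then for any u, v lying in the same coset of the subgroup 2Y, one has l'₁(u)·l'₂(v) = l'₁(v)·l'₂(u). -/
theorem stmt_5 {Y : Type*} [AddCommGroup Y] (l₁ l₂ : Y → ℝ)
    (hval : ∀ y : Y, (l₁ y = 1 ∨ l₁ y = -1) ∧ (l₂ y = 1 ∨ l₂ y = -1))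
    (h0 : l₁ 0 = 1 ∧ l₂ 0 = 1)
    (hsym : ∀ y : Y, l₁ (-y) = l₁ y ∧ l₂ (-y) = l₂ y)
    (heq : ∀ u v : Y,
      l₁ (u + v) * l₂ (u - v) = l₁ u * l₂ u * l₁ v * l₂ v) :
    ∀ u v : Y, (∃ w : Y, u - v = w + w) → l₁ u * l₂ v = l₁ v * l₂ u := by
  rintro u v ⟨w, hw⟩
  have hu : u = v + (w + w) := sub_eq_iff_eq_add'.mp hw
  subst hu
  have A := heq (v + w) w
  have B := heq (v + w) (-w)
  have e1 : v + w + w = v + (w + w) := by abel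
  have e2 : v + w - w = v := by abel
  have e3 : v + w + -w = v := by abel
  have e4 : v + w - -w = v + (w + w) := by abel
  rw [e1, e2] at A
  rw [e3, e4, (hsym w).1, (hsym w).2] at B
  linarith [A, B]
end

section
/- Let Y be an abelian group and μ̂₁, μ̂₂ : Y → ℂ functions satisfying μ̂₁(u+v)·μ̂₂(u−v) = μ̂₁(u)·μ̂₂(u)·μ̂₁(v)·μ̂₂(−v) for all u, v ∈ Y, with μ̂_k(0) = 1 and μ̂_k(−y) = conj(μ̂_k(y)). Then |μ̂₁(2y)| = |μ̂₂(2y)| for all y ∈ Y. -/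
/-! Substituting `v = y` and `v = -y` into the functional equation expresses `μ₁ (2y)` and
`μ₂ (2y)` as products of values at `±y`; by hermitian symmetry both have norm
`‖μ₁ y‖² ‖μ₂ y‖²`. -/

section KacBernstein

variable {Y : Type*} [AddCommGroup Y] {μ₁ μ₂ : Y → ℂ}

theorem kacBernstein_fst_add_self (h0 : μ₂ 0 = 1)
    (heq : ∀ u v : Y, μ₁ (u + v) * μ₂ (u - v) = μ₁ u * μ₂ u * μ₁ v * μ₂ (-v)) (y : Y) :
    μ₁ (y + y) = μ₁ y * μ₂ y * μ₁ y * μ₂ (-y) := by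
  simpa only [sub_self, h0, mul_one] using heq y y

theorem kacBernstein_snd_add_self (h0 : μ₁ 0 = 1)
    (heq : ∀ u v : Y, μ₁ (u + v) * μ₂ (u - v) = μ₁ u * μ₂ u * μ₁ v * μ₂ (-v)) (y : Y) :
    μ₂ (y + y) = μ₁ y * μ₂ y * μ₁ (-y) * μ₂ y := by
  simpa only [add_neg_cancel, sub_neg_eq_add, neg_neg, h0, one_mul] using heq y (-y)

end KacBernstein

theorem stmt_11 {Y : Type*} [AddCommGroup Y] (μ₁ μ₂ : Y → ℂ)
    (h0 : μ₁ 0 = 1 ∧ μ₂ 0 = 1)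
    (hherm : ∀ y : Y, μ₁ (-y) = (starRingEnd ℂ) (μ₁ y) ∧
      μ₂ (-y) = (starRingEnd ℂ) (μ₂ y))
    (heq : ∀ u v : Y,
      μ₁ (u + v) * μ₂ (u - v) = μ₁ u * μ₂ u * μ₁ v * μ₂ (-v)) :
    ∀ y : Y, ‖μ₁ (y + y)‖ = ‖μ₂ (y + y)‖ := by
  intro y
  rw [kacBernstein_fst_add_self h0.2 heq, kacBernstein_snd_add_self h0.1 heq,
    (hherm y).1, (hherm y).2]
  simp only [norm_mul, Complex.norm_conj]
end

section
/- Let Y be an abelian group and ψ : Y → ℝ satisfy Δ_h² Δ_{2k} ψ(y) = 0 for all h, k, y ∈ Y, together with ψ(−y) = ψ(y) and ψ(0) = 0. If furthermore Y = 2Y (every element is divisible by 2), then ψ satisfies the quadratic equation ψ(u+v) + ψ(u−v) = 2(ψ(u) + ψ(v)) for all u, v ∈ Y. -/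
theorem stmt_15 {Y : Type*} [AddCommGroup Y] (ψ : Y → ℝ)
    (heq : ∀ h k y : Y, finDiff h (finDiff h (finDiff (k + k) ψ)) y = 0)
    (hsym : ∀ y : Y, ψ (-y) = ψ y) (h0 : ψ 0 = 0)
    (hdiv : ∀ y : Y, ∃ z : Y, y = z + z) :
    ∀ u v : Y, ψ (u + v) + ψ (u - v) = 2 * (ψ u + ψ v) := by
  intro u v
  obtain ⟨k, hk⟩ := hdiv v
  subst hk
  have h := heq (-u) k u
  simp only [finDiff] at h
  have h1 : u + -u + -u + (k + k) = -(u - (k + k)) := by abel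
  have h2 : u + -u + -u = -u := by abel
  have h3 : u + -u + (k + k) = k + k := by abel
  have h4 : u + -u = (0 : Y) := by abel
  rw [h1, h2, h3, h4, hsym, hsym, h0] at h
  linarith
end
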